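/- In the two-locus Moran model with generator G, define the carré du champ Γ(f,g)(z) = G(fg)(z) − f(z)·G(g)(z) − g(z)·G(f)(z), and write x_i(z) = z_{i·}/N, y_j(z) = z_{·j}/N, d_{ij}(z) = z_{ij}/N − x_i(z) y_j(z), and f_{ij}(z) = d_{ij}(z). Then there exists a constant C, depending only on K and L, such that for all N ≥ 1, all z ∈ ℕ^{K×L} with Σ_{ij} z_{ij} = N, and all (i,j), (k,l) ∈ [K]×[L]: |Γ(f_{ij}, f_{kl})(z) − S_{ij,kl}(z)| ≤ C(1 + θ_A + θ_B + ρ)/N, where S_{ij,kl}(z) = x_i y_j (δ_{ik} − x_k)(δ_{jl} − y_l) + d_{kj} x_i y_l + d_{il} x_k y_j + d_{ij}(x_k y_l − δ_{ik} y_l − δ_{jl} x_k) + d_{kl}(x_i y_j − δ_{ik} y_j − δ_{jl} x_i) + d_{ij}(δ_{ik} δ_{jl} − d_{kl}) (all evaluated at z). -/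

import Mathlib

open scoped BigOperators

/-- Transition rate of the two-locus Moran model: the rate at which a haplotype
`(i,j)` dies and is replaced by a haplotype `(k,l)` when the configuration is `z`. -/
noncomputable def moranRate (N K L : ℕ) (θA θB ρ : ℝ)
    (PA : Fin K → Fin K → ℝ) (PB : Fin L → Fin L → ℝ)
    (z : Fin K → Fin L → ℕ) (i : Fin K) (j : Fin L) (k : Fin K) (l : Fin L) : ℝ :=
  ((z i j : ℝ) / N) *
    (((N : ℝ) ^ 2 / 2) * ((z k l : ℝ) / N)
      + (N : ℝ) * (θA / 2 * PA i k * (if j = l then 1 else 0)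
          + θB / 2 * PB j l * (if i = k then 1 else 0)
          + ρ / 2 * ((∑ l', (z k l' : ℝ)) / N) * ((∑ k', (z k' l : ℝ)) / N)))

/-- The configuration `z − e_{ij} + e_{kl}`. -/
def moranUpdate {K L : ℕ} (z : Fin K → Fin L → ℕ)
    (i : Fin K) (j : Fin L) (k : Fin K) (l : Fin L) : Fin K → Fin L → ℕ :=
  fun i' j' => z i' j' - (if i' = i ∧ j' = j then 1 else 0)
    + (if i' = k ∧ j' = l then 1 else 0)

/-- Generator of the two-locus Moran model acting on `f : ℕ^{K×L} → ℝ`. -/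
noncomputable def moranGen (N K L : ℕ) (θA θB ρ : ℝ)
    (PA : Fin K → Fin K → ℝ) (PB : Fin L → Fin L → ℝ)
    (f : (Fin K → Fin L → ℕ) → ℝ) (z : Fin K → Fin L → ℕ) : ℝ :=
  ∑ i, ∑ j, ∑ k, ∑ l,
    moranRate N K L θA θB ρ PA PB z i j k l * (f (moranUpdate z i j k l) - f z)

/-- Carré du champ operator of the Moran generator:
`Γ(f,g) = G(fg) − f·G(g) − g·G(f)`. -/
noncomputable def moranCarre (N K L : ℕ) (θA θB ρ : ℝ)
    (PA : Fin K → Fin K → ℝ) (PB : Fin L → Fin L → ℝ)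
    (f g : (Fin K → Fin L → ℕ) → ℝ) (z : Fin K → Fin L → ℕ) : ℝ :=
  moranGen N K L θA θB ρ PA PB (fun z' => f z' * g z') z
    - f z * moranGen N K L θA θB ρ PA PB g z
    - g z * moranGen N K L θA θB ρ PA PB f z

/-- The marginal allele frequency `x_u(z) = z_{u·}/N`. -/
noncomputable def moranX (N : ℕ) {K L : ℕ} (z : Fin K → Fin L → ℕ) (u : Fin K) : ℝ :=
  (∑ l, (z u l : ℝ)) / N

/-- The marginal allele frequency `y_v(z) = z_{·v}/N`. -/
noncomputable def moranY (N : ℕ) {K L : ℕ} (z : Fin K → Fin L → ℕ) (v : Fin L) : ℝ :=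
  (∑ k, (z k v : ℝ)) / N

/-- The linkage-disequilibrium coordinate `d_{uv}(z)`. -/
noncomputable def moranLD (N : ℕ) {K L : ℕ} (z : Fin K → Fin L → ℕ)
    (u : Fin K) (v : Fin L) : ℝ :=
  (z u v : ℝ) / N - moranX N z u * moranY N z v

/-- The limiting diffusion coefficient `S_{ij,kl}` of the pair of
linkage-disequilibrium coordinates `(d_{ij}, d_{kl})`. -/
noncomputable def moranSDD (N : ℕ) {K L : ℕ} (z : Fin K → Fin L → ℕ)
    (i k : Fin K) (j l : Fin L) : ℝ :=
  moranX N z i * moranY N z j * ((if i = k then 1 else 0) - moranX N z k) *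
      ((if j = l then 1 else 0) - moranY N z l)
    + moranLD N z k j * moranX N z i * moranY N z l
    + moranLD N z i l * moranX N z k * moranY N z j
    + moranLD N z i j * (moranX N z k * moranY N z l
        - (if i = k then 1 else 0) * moranY N z l
        - (if j = l then 1 else 0) * moranX N z k)
    + moranLD N z k l * (moranX N z i * moranY N z j
        - (if i = k then 1 else 0) * moranY N z j
        - (if j = l then 1 else 0) * moranX N z i)
    + moranLD N z i j * ((if i = k then 1 else 0) * (if j = l then 1 else 0)
        - moranLD N z k l)

/-!
The carré du champ is `Γ(f, f')(z) = Σ rate · Δf · Δf'`, summed over the jumps `e_{ab} → e_{cd}`.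
Writing `p = z / N`, such a jump has rate `N² p_{ab} p_{cd} / 2` from resampling plus
`N p_{ab} m_{abcd}` from mutation and recombination, and it changes `d_{ij}` by
`(g_{ij}(c,d) - g_{ij}(a,b)) / N + O(1 / N²)`, where `g_{ij} = ∂ d_{ij} / ∂ p`. The resampling part
therefore contributes `½ Σ p_{ab} p_{cd} (g_{ij}(c,d) - g_{ij}(a,b)) (g_{kl}(c,d) - g_{kl}(a,b))`,
which is the `p`-covariance of `g_{ij}` and `g_{kl}`, and this covariance is `S_{ij,kl}`. The
remaining error of a jump is `O(1 / N³)` per unit of resampling rate and `O(1 / N²)` per unit of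
mutation-recombination rate, and these rates total `N² / 2` and `N (θ_A + θ_B + ρ) / 2`.
-/

open Finset

theorem half_sum_sum_mul_sub_mul_sub {α : Type*} [Fintype α] (p F G : α → ℝ)
    (hp : ∑ a, p a = 1) :
    ∑ a, ∑ b, p a * p b / 2 * ((F b - F a) * (G b - G a))
      = ∑ a, p a * (F a * G a) - (∑ a, p a * F a) * ∑ a, p a * G a := by
  have expand : ∀ a b, p a * p b / 2 * ((F b - F a) * (G b - G a))
      = (p a * (p b * (F b * G b)) + p b * (p a * (F a * G a))
          - p a * F a * (p b * G b) - p b * F b * (p a * G a)) / 2 := fun a b => by ring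
  simp only [expand, ← sum_div, sum_add_distrib, sum_sub_distrib, ← mul_sum, ← sum_mul, hp]
  ring

theorem abs_rate_mul_incr_mul_incr_sub_le {n s t A A' B B' : ℝ} (hn : 1 ≤ n) (hs : 0 ≤ s)
    (ht : 0 ≤ t) (hA : |A| ≤ 2) (hA' : |A'| ≤ 2) (hB : |B| ≤ 1) (hB' : |B'| ≤ 1) :
    |(n ^ 2 / 2 * s + n * t) * ((A - B / n) / n * ((A' - B' / n) / n)) - s / 2 * (A * A')|
      ≤ (5 / 2 * s + 9 * t) / n := by
  have hn0 : 0 < n := by linarith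
  have hBn : |B / n| ≤ 1 := by
    rw [abs_div, abs_of_pos hn0]
    exact div_le_one_of_le₀ (hB.trans hn) hn0.le
  have hBn' : |B' / n| ≤ 1 := by
    rw [abs_div, abs_of_pos hn0]
    exact div_le_one_of_le₀ (hB'.trans hn) hn0.le
  have hsplit : (n ^ 2 / 2 * s + n * t) * ((A - B / n) / n * ((A' - B' / n) / n))
        - s / 2 * (A * A')
      = (s / 2 * (-(A * B') - B * A' + B * (B' / n)) + t * ((A - B / n) * (A' - B' / n))) / n := by
    field_simp
    ring
  have hfirst : |-(A * B') - B * A' + B * (B' / n)| ≤ 5 := by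
    calc _ ≤ |A| * |B'| + |B| * |A'| + |B| * |B' / n| := by
          simpa only [abs_neg, abs_mul, ← sub_eq_add_neg] using
            abs_add_three (-(A * B')) (-(B * A')) (B * (B' / n))
      _ ≤ 2 * 1 + 1 * 2 + 1 * 1 := by gcongr
      _ = 5 := by norm_num
  have hsecond : |(A - B / n) * (A' - B' / n)| ≤ 9 := by
    calc _ ≤ (|A| + |B / n|) * (|A'| + |B' / n|) := by
          rw [abs_mul]
          gcongr <;> exact abs_sub _ _
      _ ≤ (2 + 1) * (2 + 1) := by gcongr
      _ = 9 := by norm_num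
  rw [hsplit, abs_div, abs_of_pos hn0]
  gcongr
  calc _ ≤ s / 2 * |-(A * B') - B * A' + B * (B' / n)| + t * |(A - B / n) * (A' - B' / n)| := by
        refine (abs_add_le _ _).trans ?_
        rw [abs_mul, abs_mul, abs_of_nonneg (by positivity : 0 ≤ s / 2), abs_of_nonneg ht]
    _ ≤ s / 2 * 5 + t * 9 := by gcongr
    _ = 5 / 2 * s + 9 * t := by ring

theorem moranCarre_eq_sum (N K L : ℕ) (θA θB ρ : ℝ) (PA : Fin K → Fin K → ℝ)
    (PB : Fin L → Fin L → ℝ) (f g : (Fin K → Fin L → ℕ) → ℝ) (z : Fin K → Fin L → ℕ) :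
    moranCarre N K L θA θB ρ PA PB f g z
      = ∑ a, ∑ b, ∑ c, ∑ d, moranRate N K L θA θB ρ PA PB z a b c d *
          ((f (moranUpdate z a b c d) - f z) * (g (moranUpdate z a b c d) - g z)) := by
  simp only [moranCarre, moranGen, mul_sum, ← sum_sub_distrib]
  congr! 4
  ring

section

variable {K L : ℕ}

theorem moranUpdate_cast {z : Fin K → Fin L → ℕ} {a : Fin K} {b : Fin L} (c : Fin K)
    (d : Fin L) (hab : 1 ≤ z a b) (u : Fin K) (v : Fin L) :
    (moranUpdate z a b c d u v : ℝ)
      = z u v - (if u = a then 1 else 0) * (if v = b then 1 else 0)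
        + (if u = c then 1 else 0) * (if v = d then 1 else 0) := by
  have hle : (if u = a ∧ v = b then 1 else 0) ≤ z u v := by
    split_ifs with h
    · exact h.1 ▸ h.2 ▸ hab
    · exact Nat.zero_le _
  simp only [moranUpdate, Nat.cast_add, Nat.cast_sub hle, Nat.cast_ite, Nat.cast_one,
    Nat.cast_zero, ite_zero_mul_ite_zero, mul_one]

theorem moranX_moranUpdate {z : Fin K → Fin L → ℕ} {a : Fin K} {b : Fin L} (N : ℕ) (c : Fin K)
    (d : Fin L) (hab : 1 ≤ z a b) (u : Fin K) :
    moranX N (moranUpdate z a b c d) u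
      = moranX N z u + ((if u = c then 1 else 0) - (if u = a then 1 else 0)) / N := by
  simp only [moranX, moranUpdate_cast c d hab, sum_add_distrib, sum_sub_distrib, ← mul_sum,
    sum_ite_eq', mem_univ, if_true, mul_one]
  ring

theorem moranY_moranUpdate {z : Fin K → Fin L → ℕ} {a : Fin K} {b : Fin L} (N : ℕ) (c : Fin K)
    (d : Fin L) (hab : 1 ≤ z a b) (v : Fin L) :
    moranY N (moranUpdate z a b c d) v
      = moranY N z v + ((if v = d then 1 else 0) - (if v = b then 1 else 0)) / N := by
  simp only [moranY, moranUpdate_cast c d hab, sum_add_distrib, sum_sub_distrib, ← sum_mul,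
    sum_ite_eq', mem_univ, if_true, one_mul]
  ring

theorem moranX_nonneg (N : ℕ) (z : Fin K → Fin L → ℕ) (u : Fin K) : 0 ≤ moranX N z u := by
  unfold moranX
  positivity

theorem moranY_nonneg (N : ℕ) (z : Fin K → Fin L → ℕ) (v : Fin L) : 0 ≤ moranY N z v := by
  unfold moranY
  positivity

theorem moranX_le_one {N : ℕ} {z : Fin K → Fin L → ℕ} (hz : ∑ i, ∑ j, z i j = N)
    (u : Fin K) : moranX N z u ≤ 1 := by
  refine div_le_one_of_le₀ ?_ (Nat.cast_nonneg N)
  rw [← hz]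
  exact_mod_cast single_le_sum (f := fun i => ∑ j, z i j) (fun _ _ => Nat.zero_le _)
    (mem_univ u)

theorem moranY_le_one {N : ℕ} {z : Fin K → Fin L → ℕ} (hz : ∑ i, ∑ j, z i j = N)
    (v : Fin L) : moranY N z v ≤ 1 := by
  refine div_le_one_of_le₀ ?_ (Nat.cast_nonneg N)
  rw [← hz]
  exact_mod_cast sum_le_sum fun i _ =>
    single_le_sum (f := z i) (fun _ _ => Nat.zero_le _) (mem_univ v)

theorem sum_sum_div_eq_one {N : ℕ} (hN : (N : ℝ) ≠ 0) {z : Fin K → Fin L → ℕ}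
    (hz : ∑ i, ∑ j, z i j = N) : ∑ a, ∑ b, (z a b : ℝ) / N = 1 := by
  simp only [← sum_div]
  exact_mod_cast div_self hN ▸ (congrArg (fun n : ℕ => (n : ℝ) / N) hz)

theorem sum_moranX_eq_one {N : ℕ} (hN : (N : ℝ) ≠ 0) {z : Fin K → Fin L → ℕ}
    (hz : ∑ i, ∑ j, z i j = N) : ∑ u, moranX N z u = 1 := by
  simpa only [moranX, sum_div] using sum_sum_div_eq_one hN hz

theorem sum_moranY_eq_one {N : ℕ} (hN : (N : ℝ) ≠ 0) {z : Fin K → Fin L → ℕ}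
    (hz : ∑ i, ∑ j, z i j = N) : ∑ v, moranY N z v = 1 := by
  simpa only [moranY, sum_div, sum_comm (γ := Fin L)] using sum_sum_div_eq_one hN hz

/-- `∂ d_{ij} / ∂ p_{cd}` at the frequencies `p = z / N`; a jump `e_{ab} → e_{cd}` moves `p` by
`(e_{cd} - e_{ab}) / N`. -/
noncomputable def ldPartial (N : ℕ) (z : Fin K → Fin L → ℕ) (i : Fin K) (j : Fin L)
    (c : Fin K) (d : Fin L) : ℝ :=
  (if i = c then 1 else 0) * (if j = d then 1 else 0)
    - moranX N z i * (if j = d then 1 else 0) - moranY N z j * (if i = c then 1 else 0)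

theorem abs_ldPartial_le_one {N : ℕ} {z : Fin K → Fin L → ℕ} (hz : ∑ i, ∑ j, z i j = N)
    (i : Fin K) (j : Fin L) (c : Fin K) (d : Fin L) : |ldPartial N z i j c d| ≤ 1 := by
  have := moranX_nonneg N z i
  have := moranY_nonneg N z j
  have := moranX_le_one hz i
  have := moranY_le_one hz j
  rw [ldPartial, abs_le]
  split_ifs <;> constructor <;> linarith

theorem moranLD_moranUpdate_sub {N : ℕ} (hN : (N : ℝ) ≠ 0) {z : Fin K → Fin L → ℕ}
    {a : Fin K} {b : Fin L} (c : Fin K) (d : Fin L) (hab : 1 ≤ z a b) (i : Fin K) (j : Fin L) :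
    moranLD N (moranUpdate z a b c d) i j - moranLD N z i j
      = (ldPartial N z i j c d - ldPartial N z i j a b
          - ((if i = c then 1 else 0) - (if i = a then 1 else 0))
            * ((if j = d then 1 else 0) - (if j = b then 1 else 0)) / N) / N := by
  rw [moranLD, moranLD, moranUpdate_cast c d hab, moranX_moranUpdate N c d hab,
    moranY_moranUpdate N c d hab, ldPartial, ldPartial]
  field_simp
  split_ifs <;> ring

theorem moranSDD_eq_cov_ldPartial (N : ℕ) (z : Fin K → Fin L → ℕ) (i k : Fin K)
    (j l : Fin L) :
    moranSDD N z i k j l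
      = ∑ c, ∑ d, (z c d : ℝ) / N * (ldPartial N z i j c d * ldPartial N z k l c d)
        - (∑ c, ∑ d, (z c d : ℝ) / N * ldPartial N z i j c d)
          * ∑ c, ∑ d, (z c d : ℝ) / N * ldPartial N z k l c d := by
  have hX (u : Fin K) : ∑ d, (z u d : ℝ) / N = moranX N z u := by rw [moranX, sum_div]
  have hY (v : Fin L) : ∑ c, (z c v : ℝ) / N = moranY N z v := by rw [moranY, sum_div]
  rcases eq_or_ne i k with rfl | hik <;> rcases eq_or_ne j l with rfl | hjl <;>
  simp only [moranSDD, moranLD, ldPartial, mul_sub, sub_mul, mul_ite, ite_mul, mul_one, one_mul,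
    mul_zero, zero_mul, sum_sub_distrib, sum_ite_eq, sum_ite_irrel, sum_const_zero,
    mem_univ, ← sum_mul, if_true, if_false, *] <;>
  ring

theorem moranSDD_eq_half_sum_sum {N : ℕ} (hN : (N : ℝ) ≠ 0) {z : Fin K → Fin L → ℕ}
    (hz : ∑ i, ∑ j, z i j = N) (i k : Fin K) (j l : Fin L) :
    moranSDD N z i k j l
      = ∑ a, ∑ b, ∑ c, ∑ d, (z a b : ℝ) / N * ((z c d : ℝ) / N) / 2 *
          ((ldPartial N z i j c d - ldPartial N z i j a b)
            * (ldPartial N z k l c d - ldPartial N z k l a b)) := by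
  have hcov := half_sum_sum_mul_sub_mul_sub (fun x : Fin K × Fin L => (z x.1 x.2 : ℝ) / N)
    (fun x => ldPartial N z i j x.1 x.2) (fun x => ldPartial N z k l x.1 x.2)
    (by rw [Fintype.sum_prod_type]; exact sum_sum_div_eq_one hN hz)
  simp only [Fintype.sum_prod_type] at hcov
  rw [hcov, moranSDD_eq_cov_ldPartial]

noncomputable def moranMutRecRate (N : ℕ) (θA θB ρ : ℝ) (PA : Fin K → Fin K → ℝ)
    (PB : Fin L → Fin L → ℝ) (z : Fin K → Fin L → ℕ) (a : Fin K) (b : Fin L) (c : Fin K)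
    (d : Fin L) : ℝ :=
  θA / 2 * PA a c * (if b = d then 1 else 0) + θB / 2 * PB b d * (if a = c then 1 else 0)
    + ρ / 2 * moranX N z c * moranY N z d

theorem moranRate_eq (N : ℕ) (θA θB ρ : ℝ) (PA : Fin K → Fin K → ℝ)
    (PB : Fin L → Fin L → ℝ) (z : Fin K → Fin L → ℕ) (a : Fin K) (b : Fin L) (c : Fin K)
    (d : Fin L) :
    moranRate N K L θA θB ρ PA PB z a b c d
      = N ^ 2 / 2 * ((z a b : ℝ) / N * ((z c d : ℝ) / N))
        + N * ((z a b : ℝ) / N * moranMutRecRate N θA θB ρ PA PB z a b c d) := by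
  rw [moranRate, moranMutRecRate, moranX, moranY]
  ring

theorem moranMutRecRate_nonneg {θA θB ρ : ℝ} (hθA : 0 ≤ θA) (hθB : 0 ≤ θB) (hρ : 0 ≤ ρ)
    {PA : Fin K → Fin K → ℝ} {PB : Fin L → Fin L → ℝ} (hPA : ∀ a c, 0 ≤ PA a c)
    (hPB : ∀ b d, 0 ≤ PB b d) (N : ℕ) (z : Fin K → Fin L → ℕ) (a : Fin K) (b : Fin L)
    (c : Fin K) (d : Fin L) : 0 ≤ moranMutRecRate N θA θB ρ PA PB z a b c d := by
  have := hPA a c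
  have := hPB b d
  have := moranX_nonneg N z c
  have := moranY_nonneg N z d
  unfold moranMutRecRate
  positivity

theorem sum_sum_moranMutRecRate {N : ℕ} (hN : (N : ℝ) ≠ 0) {z : Fin K → Fin L → ℕ}
    (hz : ∑ i, ∑ j, z i j = N) (θA θB ρ : ℝ) {PA : Fin K → Fin K → ℝ}
    {PB : Fin L → Fin L → ℝ} (hPA : ∀ a, ∑ c, PA a c = 1) (hPB : ∀ b, ∑ d, PB b d = 1)
    (a : Fin K) (b : Fin L) :
    ∑ c, ∑ d, moranMutRecRate N θA θB ρ PA PB z a b c d = (θA + θB + ρ) / 2 := by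
  simp only [moranMutRecRate, mul_ite, mul_one, mul_zero, sum_add_distrib, sum_ite_eq, mem_univ,
    if_true, sum_ite_irrel, ← mul_sum, hPA, hPB, sum_const_zero, sum_moranX_eq_one hN hz,
    sum_moranY_eq_one hN hz]
  ring

theorem abs_moranRate_mul_moranLD_incr_sub_le {N : ℕ} (hN : 1 ≤ N) {z : Fin K → Fin L → ℕ}
    (hz : ∑ i, ∑ j, z i j = N) {θA θB ρ : ℝ} (hθA : 0 ≤ θA) (hθB : 0 ≤ θB) (hρ : 0 ≤ ρ)
    {PA : Fin K → Fin K → ℝ} {PB : Fin L → Fin L → ℝ} (hPA : ∀ a c, 0 ≤ PA a c)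
    (hPB : ∀ b d, 0 ≤ PB b d) (i k : Fin K) (j l : Fin L) (a : Fin K) (b : Fin L) (c : Fin K)
    (d : Fin L) :
    |moranRate N K L θA θB ρ PA PB z a b c d *
        ((moranLD N (moranUpdate z a b c d) i j - moranLD N z i j) *
          (moranLD N (moranUpdate z a b c d) k l - moranLD N z k l))
      - (z a b : ℝ) / N * ((z c d : ℝ) / N) / 2 *
          ((ldPartial N z i j c d - ldPartial N z i j a b)
            * (ldPartial N z k l c d - ldPartial N z k l a b))|
      ≤ (5 / 2 * ((z a b : ℝ) / N * ((z c d : ℝ) / N))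
          + 9 * ((z a b : ℝ) / N * moranMutRecRate N θA θB ρ PA PB z a b c d)) / N := by
  rcases Nat.eq_zero_or_pos (z a b) with hab | hab
  · simp [moranRate, hab]
  have hN0 : (N : ℝ) ≠ 0 := by positivity
  have hincr (i : Fin K) (j : Fin L) : |ldPartial N z i j c d - ldPartial N z i j a b| ≤ 2 :=
    (abs_sub _ _).trans
      (by linarith [abs_ldPartial_le_one hz i j c d, abs_ldPartial_le_one hz i j a b])
  have hind (P Q : Prop) [Decidable P] [Decidable Q] :
      |(if P then (1 : ℝ) else 0) - if Q then 1 else 0| ≤ 1 := by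
    split_ifs <;> norm_num
  rw [moranRate_eq, moranLD_moranUpdate_sub hN0 c d hab, moranLD_moranUpdate_sub hN0 c d hab]
  exact abs_rate_mul_incr_mul_incr_sub_le (by exact_mod_cast hN) (by positivity)
    (mul_nonneg (by positivity) (moranMutRecRate_nonneg hθA hθB hρ hPA hPB N z a b c d))
    (hincr i j) (hincr k l)
    (by rw [abs_mul]; exact mul_le_one₀ (hind _ _) (abs_nonneg _) (hind _ _))
    (by rw [abs_mul]; exact mul_le_one₀ (hind _ _) (abs_nonneg _) (hind _ _))

end

theorem moranCarre_LD_general (K L : ℕ) :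
    ∃ C : ℝ, 0 < C ∧
      ∀ (θA θB ρ : ℝ), 0 ≤ θA → 0 ≤ θB → 0 ≤ ρ →
      ∀ (PA : Fin K → Fin K → ℝ) (PB : Fin L → Fin L → ℝ),
        ((∀ i k, 0 ≤ PA i k) ∧ ∀ i, ∑ k, PA i k = 1) →
        ((∀ j l, 0 ≤ PB j l) ∧ ∀ j, ∑ l, PB j l = 1) →
      ∀ N : ℕ, 1 ≤ N →
      ∀ z : Fin K → Fin L → ℕ, ∑ i', ∑ j', z i' j' = N →
      ∀ (i k : Fin K) (j l : Fin L),
        |moranCarre N K L θA θB ρ PA PB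
              (fun z' => moranLD N z' i j) (fun z' => moranLD N z' k l) z
            - moranSDD N z i k j l|
          ≤ C * (1 + θA + θB + ρ) / N := by
  refine ⟨5, by norm_num, ?_⟩
  intro θA θB ρ hθA hθB hρ PA PB ⟨hPA, hPA1⟩ ⟨hPB, hPB1⟩ N hN z hz i k j l
  have hN0 : (N : ℝ) ≠ 0 := by positivity
  rw [moranCarre_eq_sum, moranSDD_eq_half_sum_sum hN0 hz, ← Real.norm_eq_abs]
  simp only [← sum_sub_distrib]
  calc _ ≤ ∑ a, ∑ b, ∑ c, ∑ d, (5 / 2 * ((z a b : ℝ) / N * ((z c d : ℝ) / N))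
          + 9 * ((z a b : ℝ) / N * moranMutRecRate N θA θB ρ PA PB z a b c d)) / N :=
        norm_sum_le_of_le _ fun a _ => norm_sum_le_of_le _ fun b _ =>
          norm_sum_le_of_le _ fun c _ => norm_sum_le_of_le _ fun d _ =>
            abs_moranRate_mul_moranLD_incr_sub_le hN hz hθA hθB hρ hPA hPB i k j l a b c d
    _ = (∑ a, ∑ b, ∑ c, ∑ d, (5 / 2 * ((z a b : ℝ) / N * ((z c d : ℝ) / N))
          + 9 * ((z a b : ℝ) / N * moranMutRecRate N θA θB ρ PA PB z a b c d))) / N := by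
        simp only [sum_div]
    _ = (5 / 2 + 9 * ((θA + θB + ρ) / 2)) / N := by
        simp only [sum_add_distrib, ← mul_sum, sum_sum_moranMutRecRate hN0 hz θA θB ρ hPA1 hPB1,
          ← sum_mul, sum_sum_div_eq_one hN0 hz, mul_one, one_mul]
    _ ≤ 5 * (1 + θA + θB + ρ) / N := by gcongr; linarith

/-- The carré du champ of the linkage-disequilibrium coordinates reproduces the
diffusion coefficient `S_{ij,kl}` up to an error of order `(1 + θ_A + θ_B + ρ)/N`,
with constant depending only on `K` and `L`. -/
theorem moranCarre_LD (K L : ℕ) (hK : 1 ≤ K) (hL : 1 ≤ L) :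
    ∃ C : ℝ, 0 < C ∧
      ∀ (θA θB ρ : ℝ), 0 ≤ θA → 0 ≤ θB → 0 ≤ ρ →
      ∀ (PA : Fin K → Fin K → ℝ) (PB : Fin L → Fin L → ℝ),
        ((∀ i k, 0 ≤ PA i k) ∧ ∀ i, ∑ k, PA i k = 1) →
        ((∀ j l, 0 ≤ PB j l) ∧ ∀ j, ∑ l, PB j l = 1) →
      ∀ N : ℕ, 1 ≤ N →
      ∀ z : Fin K → Fin L → ℕ, ∑ i', ∑ j', z i' j' = N →
      ∀ (i k : Fin K) (j l : Fin L),
        |moranCarre N K L θA θB ρ PA PB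
              (fun z' => moranLD N z' i j) (fun z' => moranLD N z' k l) z
            - moranSDD N z i k j l|
          ≤ C * (1 + θA + θB + ρ) / N :=
  moranCarre_LD_general K L
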